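/- arXiv:1812.01648 — 2 statements merged into one kernel-verified Lean document; each statement's English description precedes it below -/
import Mathlib

section
/- Suppose 𝒦(Σ) ∩ 𝒴 = {0}. Then the constrained system (Σ,𝒴) is reachable if and only if X(F) = 𝒱*(Σ) = ℛ*(Σ), where 𝒱*(Σ) is the weakly unobservable subspace and ℛ*(Σ) = 𝒱*(Σ) ∩ 𝒯*(Σ). -/
open Pointwise

/-- `ℓ`-fold iterate of a set-valued map: `SIter F ℓ x = F^ℓ(x)`. -/
def SIter {E : Type*} (F : E → Set E) : ℕ → E → Set E
  | 0, x => {x}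
  | n + 1, x => ⋃ y ∈ SIter F n x, F y

/-- `X(F)`: initial states of infinite solutions of `x_{k+1} ∈ F(x_k)`. -/
def XSet {E : Type*} (F : E → Set E) : Set E :=
  {x | ∃ f : ℕ → E, f 0 = x ∧ ∀ k, f (k + 1) ∈ F (f k)}

/-- `R(F) = ⋃_{ℓ ≥ 1} F^ℓ(0)`. -/
def RSet {E : Type*} [Zero E] (F : E → Set E) : Set E :=
  ⋃ ℓ ∈ {ℓ : ℕ | 1 ≤ ℓ}, SIter F ℓ 0

/-- The set-valued map `F(x) = Ax + B D^{-1}(𝒴 − Cx)` of the constrained system `(Σ,𝒴)`. -/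
def Fmap {n m s : ℕ} (A : Matrix (Fin n) (Fin n) ℝ) (B : Matrix (Fin n) (Fin m) ℝ)
    (C : Matrix (Fin s) (Fin n) ℝ) (D : Matrix (Fin s) (Fin m) ℝ)
    (Y : Set (Fin s → ℝ)) : (Fin n → ℝ) → Set (Fin n → ℝ) :=
  fun x => {z | ∃ u : Fin m → ℝ, C.mulVec x + D.mulVec u ∈ Y ∧ z = A.mulVec x + B.mulVec u}

/-- The strongly reachable subspace `𝒯*(Σ)`: states reachable from `0` with the output
kept identically zero along the way. -/
def Tstar {n m s : ℕ} (A : Matrix (Fin n) (Fin n) ℝ) (B : Matrix (Fin n) (Fin m) ℝ)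
    (C : Matrix (Fin s) (Fin n) ℝ) (D : Matrix (Fin s) (Fin m) ℝ) : Set (Fin n → ℝ) :=
  RSet (Fmap A B C D ({0} : Set (Fin s → ℝ)))

/-- The weakly unobservable subspace `𝒱*(Σ)`: initial states for which an input exists
making the output identically zero. -/
def Vstar {n m s : ℕ} (A : Matrix (Fin n) (Fin n) ℝ) (B : Matrix (Fin n) (Fin m) ℝ)
    (C : Matrix (Fin s) (Fin n) ℝ) (D : Matrix (Fin s) (Fin m) ℝ) : Set (Fin n → ℝ) :=
  XSet (Fmap A B C D ({0} : Set (Fin s → ℝ)))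

/-- `𝒦(Σ) = im D + C 𝒯*(Σ)`. -/
def Kset {n m s : ℕ} (A : Matrix (Fin n) (Fin n) ℝ) (B : Matrix (Fin n) (Fin m) ℝ)
    (C : Matrix (Fin s) (Fin n) ℝ) (D : Matrix (Fin s) (Fin m) ℝ) : Set (Fin s → ℝ) :=
  {y | ∃ (u : Fin m → ℝ) (t : Fin n → ℝ), t ∈ Tstar A B C D ∧ y = D.mulVec u + C.mulVec t}

/-- The image `im [C D]`. -/
def CDrange {n m s : ℕ} (C : Matrix (Fin s) (Fin n) ℝ) (D : Matrix (Fin s) (Fin m) ℝ) :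
    Set (Fin s → ℝ) :=
  Set.range (fun p : (Fin n → ℝ) × (Fin m → ℝ) => C.mulVec p.1 + D.mulVec p.2)

/-!
Since `0 ∈ 𝒴`, every zero-output trajectory is admissible, so `𝒱*(Σ) ⊆ X(F)` and
`𝒯*(Σ) ⊆ R(F)`. Conversely, along an admissible trajectory the output `Cx + Du` lies in
`im D + C𝒯*(Σ) = 𝒦(Σ)` as long as the state lies in `𝒯*(Σ)`; since `𝒦(Σ) ∩ 𝒴 = {0}` that step
has zero output, and `𝒯*(Σ)` is invariant under zero-output steps. Hence admissible
trajectories starting in `𝒯*(Σ)` are zero-output trajectories, which gives `R(F) ⊆ 𝒯*(Σ)` and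
`X(F) ∩ 𝒯*(Σ) ⊆ 𝒱*(Σ)`, and both implications follow.
-/

section SetValuedMap

variable {E : Type*} {F G : E → Set E}

lemma sIter_mono (h : ∀ x, F x ⊆ G x) : ∀ ℓ x, SIter F ℓ x ⊆ SIter G ℓ x
  | 0, _ => subset_rfl
  | ℓ + 1, x => Set.biUnion_mono (sIter_mono h ℓ x) fun y _ => h y

lemma rSet_mono [Zero E] (h : ∀ x, F x ⊆ G x) : RSet F ⊆ RSet G :=
  Set.biUnion_mono subset_rfl fun ℓ _ => sIter_mono h ℓ 0

lemma xSet_mono (h : ∀ x, F x ⊆ G x) : XSet F ⊆ XSet G :=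
  fun _ ⟨f, hf0, hf⟩ => ⟨f, hf0, fun k => h _ (hf k)⟩

lemma image_subset_rSet [Zero E] {x : E} (hx : x ∈ RSet F) : F x ⊆ RSet F := by
  intro z hz
  simp only [RSet, Set.mem_iUnion, Set.mem_ofPred_eq, exists_prop] at hx ⊢
  obtain ⟨ℓ, hℓ, hxℓ⟩ := hx
  exact ⟨ℓ + 1, hℓ.trans ℓ.le_succ, Set.mem_biUnion hxℓ hz⟩

variable {S : Set E}

lemma rSet_subset_of_invariant [Zero E] (h0 : (0 : E) ∈ S) (hS : ∀ x ∈ S, G x ⊆ S) :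
    RSet G ⊆ S := by
  have hiter : ∀ ℓ, SIter G ℓ 0 ⊆ S := by
    intro ℓ
    induction ℓ with
    | zero => simpa [SIter] using h0
    | succ ℓ ih => exact Set.iUnion₂_subset fun y hy => hS y (ih hy)
  exact Set.iUnion₂_subset fun ℓ _ => hiter ℓ

lemma xSet_inter_subset_of_invariant (hGF : ∀ x ∈ S, G x ⊆ F x) (hFS : ∀ x ∈ S, F x ⊆ S) :
    XSet G ∩ S ⊆ XSet F := by
  rintro x ⟨⟨f, hf0, hf⟩, hxS⟩
  have hfS : ∀ k, f k ∈ S := by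
    intro k
    induction k with
    | zero => exact hf0 ▸ hxS
    | succ k ih => exact hFS _ ih (hGF _ ih (hf k))
  exact ⟨f, hf0, fun k => hGF _ (hfS k) (hf k)⟩

end SetValuedMap

section ConstrainedSystem

variable {n m s : ℕ} (A : Matrix (Fin n) (Fin n) ℝ) (B : Matrix (Fin n) (Fin m) ℝ)
    (C : Matrix (Fin s) (Fin n) ℝ) (D : Matrix (Fin s) (Fin m) ℝ) {Y : Set (Fin s → ℝ)}

lemma fmap_mono {Y' : Set (Fin s → ℝ)} (hYY' : Y ⊆ Y') (x : Fin n → ℝ) :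
    Fmap A B C D Y x ⊆ Fmap A B C D Y' x :=
  fun _ ⟨u, hu, hz⟩ => ⟨u, hYY' hu, hz⟩

lemma zero_mem_tstar : (0 : Fin n → ℝ) ∈ Tstar A B C D := by
  simp only [Tstar, RSet, Set.mem_iUnion, Set.mem_ofPred_eq, exists_prop]
  exact ⟨1, le_rfl, Set.mem_biUnion (Set.mem_singleton 0) ⟨0, by simp, by simp⟩⟩

lemma fmap_subset_fmap_zero_of_mem_tstar (hK : Kset A B C D ∩ Y ⊆ {0}) {x : Fin n → ℝ}
    (hx : x ∈ Tstar A B C D) : Fmap A B C D Y x ⊆ Fmap A B C D {0} x :=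
  fun _ ⟨u, hu, hz⟩ => ⟨u, hK ⟨⟨u, x, hx, add_comm _ _⟩, hu⟩, hz⟩

lemma rSet_fmap_subset_tstar (hK : Kset A B C D ∩ Y ⊆ {0}) :
    RSet (Fmap A B C D Y) ⊆ Tstar A B C D :=
  rSet_subset_of_invariant (zero_mem_tstar A B C D) fun _ hx =>
    (fmap_subset_fmap_zero_of_mem_tstar A B C D hK hx).trans (image_subset_rSet hx)

lemma xSet_fmap_inter_tstar_subset_vstar (hK : Kset A B C D ∩ Y ⊆ {0}) :
    XSet (Fmap A B C D Y) ∩ Tstar A B C D ⊆ Vstar A B C D :=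
  xSet_inter_subset_of_invariant (fun _ => fmap_subset_fmap_zero_of_mem_tstar A B C D hK)
    fun _ => image_subset_rSet

lemma vstar_subset_xSet_fmap (h0Y : (0 : Fin s → ℝ) ∈ Y) :
    Vstar A B C D ⊆ XSet (Fmap A B C D Y) :=
  xSet_mono (fmap_mono A B C D (Set.singleton_subset_iff.mpr h0Y))

lemma tstar_subset_rSet_fmap (h0Y : (0 : Fin s → ℝ) ∈ Y) :
    Tstar A B C D ⊆ RSet (Fmap A B C D Y) :=
  rSet_mono (fmap_mono A B C D (Set.singleton_subset_iff.mpr h0Y))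

end ConstrainedSystem

theorem stmt11_general {n m s : ℕ} (A : Matrix (Fin n) (Fin n) ℝ) (B : Matrix (Fin n) (Fin m) ℝ)
    (C : Matrix (Fin s) (Fin n) ℝ) (D : Matrix (Fin s) (Fin m) ℝ)
    (Y : Set (Fin s → ℝ)) (h0Y : (0 : Fin s → ℝ) ∈ Y)
    (hK : Kset A B C D ∩ Y = {0}) :
    XSet (Fmap A B C D Y) ⊆ RSet (Fmap A B C D Y) ↔
      (XSet (Fmap A B C D Y) = Vstar A B C D ∧
        Vstar A B C D = Vstar A B C D ∩ Tstar A B C D) := by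
  constructor
  · intro hreach
    have hXT : XSet (Fmap A B C D Y) ⊆ Tstar A B C D :=
      hreach.trans (rSet_fmap_subset_tstar A B C D hK.subset)
    have hVX := vstar_subset_xSet_fmap A B C D h0Y
    have hXV : XSet (Fmap A B C D Y) ⊆ Vstar A B C D := fun _ hx =>
      xSet_fmap_inter_tstar_subset_vstar A B C D hK.subset ⟨hx, hXT hx⟩
    exact ⟨hXV.antisymm hVX, Set.left_eq_inter.mpr (hVX.trans hXT)⟩
  · rintro ⟨hXV, hVT⟩
    rw [hXV, hVT]
    exact Set.inter_subset_right.trans (tstar_subset_rSet_fmap A B C D h0Y)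

/-- If `𝒦(Σ) ∩ 𝒴 = {0}`, then `(Σ,𝒴)` is reachable iff `X(F) = 𝒱*(Σ) = ℛ*(Σ)`,
where `ℛ*(Σ) = 𝒱*(Σ) ∩ 𝒯*(Σ)`. -/
theorem stmt11 {n m s : ℕ} (A : Matrix (Fin n) (Fin n) ℝ) (B : Matrix (Fin n) (Fin m) ℝ)
    (C : Matrix (Fin s) (Fin n) ℝ) (D : Matrix (Fin s) (Fin m) ℝ)
    (Y : Set (Fin s → ℝ)) (hY : Convex ℝ Y) (h0Y : (0 : Fin s → ℝ) ∈ Y)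
    (hsolid : (interior (Y ∩ CDrange C D)).Nonempty)
    (hK : Kset A B C D ∩ Y = {0}) :
    XSet (Fmap A B C D Y) ⊆ RSet (Fmap A B C D Y) ↔
      (XSet (Fmap A B C D Y) = Vstar A B C D ∧
        Vstar A B C D = Vstar A B C D ∩ Tstar A B C D) :=
  stmt11_general A B C D Y h0Y hK
end

section
/- Suppose 𝒦(Σ) + 𝒴 = ℝ^s. Then (Σ,𝒴) is reachable if and only if R(F) = ℝ^n. -/
open Pointwise

/-!
Every state `x` lies in `X(F) + 𝒯*(Σ)`. Since `𝒦(Σ) + 𝒴 = ℝ^s`, the output constraint at any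
time can be met after adding some `τ ∈ 𝒯*` to the current state, and `τ` can be fed in through a
zero-output trajectory; as `𝒯* = F₀^N(0)` for some `N` (a stabilising chain of subspaces), that
trajectory can be chosen to vanish before the last `N` steps. So the corrections made at
successive times only disturb finitely many earlier states and stabilise to an infinite solution
starting in `x + 𝒯*`. Since `R(F)` is convex and contains `𝒯*`, reachability then gives
`x = ½ (2x + t) + ½ (-t) ∈ R(F)` for a suitable `t ∈ 𝒯*`.
-/

section SetValuedIteration

variable {α : Type*} {F G : α → Set α}

theorem mem_SIter_succ {ℓ : ℕ} {x z : α} :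
    z ∈ SIter F (ℓ + 1) x ↔ ∃ y ∈ SIter F ℓ x, z ∈ F y :=
  Set.mem_iUnion₂.trans (by simp only [exists_prop])

theorem mem_SIter_iff {ℓ : ℕ} {x z : α} :
    z ∈ SIter F ℓ x ↔ ∃ f : ℕ → α, f 0 = x ∧ (∀ k < ℓ, f (k + 1) ∈ F (f k)) ∧ f ℓ = z := by
  induction ℓ generalizing z with
  | zero =>
    refine ⟨fun hz => ⟨fun _ => x, rfl, by simp, hz.symm⟩, ?_⟩
    rintro ⟨f, rfl, -, rfl⟩
    rfl
  | succ ℓ ih =>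
    rw [mem_SIter_succ]
    constructor
    · rintro ⟨y, hy, hz⟩
      obtain ⟨f, hf0, hf, rfl⟩ := ih.1 hy
      refine ⟨Function.update f (ℓ + 1) z, by simpa using hf0, fun k hk => ?_, by simp⟩
      rcases Nat.lt_succ_iff_lt_or_eq.1 hk with hk | rfl
      · simpa [Function.update_of_ne (show k + 1 ≠ ℓ + 1 by omega),
          Function.update_of_ne (show k ≠ ℓ + 1 by omega)] using hf k hk
      · simpa using hz
    · rintro ⟨f, hf0, hf, rfl⟩
      exact ⟨f ℓ, ih.2 ⟨f, hf0, fun k hk => hf k (by omega), rfl⟩, hf ℓ (by omega)⟩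

theorem SIter_subset_SIter (h : ∀ y, F y ⊆ G y) (ℓ : ℕ) (x : α) : SIter F ℓ x ⊆ SIter G ℓ x := by
  induction ℓ with
  | zero => exact subset_rfl
  | succ ℓ ih => exact Set.biUnion_mono ih fun y _ => h y

theorem SIter_monotone {x : α} (hx : x ∈ F x) : Monotone (SIter F · x) := by
  refine monotone_nat_of_le_succ fun ℓ => ?_
  induction ℓ with
  | zero => simpa [SIter] using hx
  | succ ℓ ih => exact Set.biUnion_subset_biUnion_left ih

theorem mem_SIter_self {x : α} (hx : x ∈ F x) (ℓ : ℕ) : x ∈ SIter F ℓ x :=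
  SIter_monotone hx (Nat.zero_le ℓ) rfl

theorem smul_add_smul_mem_SIter {R E : Type*} [Add E] [SMul R E] {F : E → Set E} {a b : R}
    (hF : ∀ x y z w, z ∈ F x → w ∈ F y → a • z + b • w ∈ F (a • x + b • y)) (ℓ : ℕ)
    {x y z w : E} (hz : z ∈ SIter F ℓ x) (hw : w ∈ SIter F ℓ y) :
    a • z + b • w ∈ SIter F ℓ (a • x + b • y) := by
  induction ℓ generalizing z w with
  | zero => rw [Set.mem_singleton_iff.1 hz, Set.mem_singleton_iff.1 hw]; rfl
  | succ ℓ ih =>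
    obtain ⟨z', hz', hz⟩ := mem_SIter_succ.1 hz
    obtain ⟨w', hw', hw⟩ := mem_SIter_succ.1 hw
    exact mem_SIter_succ.2 ⟨_, ih hz' hw', hF _ _ _ _ hz hw⟩

end SetValuedIteration

section Reachable

variable {E : Type*} [Zero E] {F G : E → Set E}

theorem RSet_eq_iUnion : RSet F = ⋃ ℓ, SIter F (ℓ + 1) 0 := by
  ext z
  simp only [RSet, Set.mem_iUnion]
  refine ⟨fun ⟨ℓ, hℓ, hz⟩ => ⟨ℓ - 1, by rwa [Nat.sub_add_cancel hℓ]⟩,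
    fun ⟨ℓ, hz⟩ => ⟨ℓ + 1, Nat.le_add_left 1 ℓ, hz⟩⟩

theorem SIter_subset_RSet (h0 : (0 : E) ∈ F 0) (ℓ : ℕ) : SIter F ℓ 0 ⊆ RSet F :=
  RSet_eq_iUnion (F := F) ▸
    (SIter_monotone h0 (Nat.le_succ ℓ)).trans (Set.subset_iUnion (fun i => SIter F (i + 1) 0) ℓ)

theorem RSet_subset_RSet (h : ∀ y, F y ⊆ G y) : RSet F ⊆ RSet G :=
  Set.biUnion_mono subset_rfl fun ℓ _ => SIter_subset_SIter h ℓ 0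

theorem convex_RSet {E : Type*} [AddCommGroup E] [Module ℝ E] {F : E → Set E}
    (h0 : (0 : E) ∈ F 0) (hconv : ∀ ℓ, Convex ℝ (SIter F ℓ 0)) : Convex ℝ (RSet F) := by
  have hmono : Monotone fun ℓ => SIter F (ℓ + 1) 0 := fun _ _ h =>
    SIter_monotone h0 (Nat.succ_le_succ h)
  exact RSet_eq_iUnion (F := F) ▸ hmono.directed_le.convex_iUnion fun ℓ => hconv (ℓ + 1)

end Reachable

section Receding

variable {E : Type*} [AddCommGroup E] {F : E → Set E}

theorem exists_add_mem_XSet_of_correction (T : AddSubgroup E) (N : ℕ)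
    (hcorr : ∀ (i : ℕ) (f : ℕ → E), (∀ k < i, f (k + 1) ∈ F (f k)) →
      ∃ f' : ℕ → E, (∀ k < i + 1, f' (k + 1) ∈ F (f' k)) ∧ f' 0 - f 0 ∈ T ∧
        ∀ k, k + N ≤ i → f' k = f k)
    (x : E) : ∃ t ∈ T, x + t ∈ XSet F := by
  choose! c hc using hcorr
  -- `G i` is the path after `i` corrections; its state at time `k` is final once `k + N ≤ i`
  let G : ℕ → ℕ → E := fun i => Nat.rec (fun _ => x) c i
  have hG : ∀ i, (∀ k < i, G i (k + 1) ∈ F (G i k)) ∧ G i 0 - x ∈ T := by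
    intro i
    induction i with
    | zero => exact ⟨fun k hk => absurd hk (Nat.not_lt_zero k), by simp [G]⟩
    | succ i ih =>
      obtain ⟨hpath, hstart, -⟩ := hc i (G i) ih.1
      exact ⟨hpath, by simpa using T.add_mem hstart ih.2⟩
  have hstable : ∀ k i, k + N ≤ i → G i k = G (k + N) k := by
    intro k i hi
    induction i, hi using Nat.le_induction with
    | base => rfl
    | succ i hi ih => exact ((hc i (G i) (hG i).1).2.2 k hi).trans ih
  refine ⟨G N 0 - x, (hG N).2, fun k => G (k + N) k, by simp, fun k => ?_⟩
  show G (k + 1 + N) (k + 1) ∈ F (G (k + N) k)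
  rw [← hstable k (k + 1 + N) (by omega)]
  exact (hG _).1 k (by omega)

end Receding

section ConstrainedSystem

variable {n m s : ℕ} (A : Matrix (Fin n) (Fin n) ℝ) (B : Matrix (Fin n) (Fin m) ℝ)
  (C : Matrix (Fin s) (Fin n) ℝ) (D : Matrix (Fin s) (Fin m) ℝ)

theorem zero_mem_Fmap {Y : Set (Fin s → ℝ)} (h0Y : (0 : Fin s → ℝ) ∈ Y) :
    (0 : Fin n → ℝ) ∈ Fmap A B C D Y 0 :=
  ⟨0, by simpa using h0Y, by simp⟩

theorem smul_add_smul_mem_Fmap {Y Y' Y'' : Set (Fin s → ℝ)} {a b : ℝ}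
    (hY : ∀ y ∈ Y, ∀ y' ∈ Y', a • y + b • y' ∈ Y'') {x x' z z' : Fin n → ℝ}
    (hz : z ∈ Fmap A B C D Y x) (hz' : z' ∈ Fmap A B C D Y' x') :
    a • z + b • z' ∈ Fmap A B C D Y'' (a • x + b • x') := by
  obtain ⟨u, hu, rfl⟩ := hz
  obtain ⟨u', hu', rfl⟩ := hz'
  refine ⟨a • u + b • u', ?_, ?_⟩
  · convert hY _ hu _ hu' using 1
    simp only [Matrix.mulVec_add, Matrix.mulVec_smul]
    module
  · simp only [Matrix.mulVec_add, Matrix.mulVec_smul]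
    module

theorem convex_RSet_Fmap {Y : Set (Fin s → ℝ)} (hY : Convex ℝ Y) (h0Y : (0 : Fin s → ℝ) ∈ Y) :
    Convex ℝ (RSet (Fmap A B C D Y)) := by
  refine convex_RSet (zero_mem_Fmap A B C D h0Y) fun ℓ z hz w hw a b ha hb hab => ?_
  have hF : ∀ x y z w, z ∈ Fmap A B C D Y x → w ∈ Fmap A B C D Y y →
      a • z + b • w ∈ Fmap A B C D Y (a • x + b • y) := fun _ _ _ _ =>
    smul_add_smul_mem_Fmap A B C D fun _ hy _ hy' => hY hy hy' ha hb hab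
  simpa only [smul_zero, add_zero] using smul_add_smul_mem_SIter hF ℓ hz hw

theorem smul_add_smul_mem_SIter_zeroOutput (a b : ℝ) {ℓ : ℕ} {z w : Fin n → ℝ}
    (hz : z ∈ SIter (Fmap A B C D {0}) ℓ 0) (hw : w ∈ SIter (Fmap A B C D {0}) ℓ 0) :
    a • z + b • w ∈ SIter (Fmap A B C D {0}) ℓ 0 := by
  have hF : ∀ x y z w, z ∈ Fmap A B C D {0} x → w ∈ Fmap A B C D {0} y →
      a • z + b • w ∈ Fmap A B C D {0} (a • x + b • y) := fun _ _ _ _ =>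
    smul_add_smul_mem_Fmap A B C D fun _ hy _ hy' => by simp [Set.mem_singleton_iff.1 hy,
      Set.mem_singleton_iff.1 hy']
  simpa only [smul_zero, add_zero] using smul_add_smul_mem_SIter hF ℓ hz hw

def zeroOutputReach (ℓ : ℕ) : Submodule ℝ (Fin n → ℝ) where
  carrier := SIter (Fmap A B C D {0}) ℓ 0
  add_mem' {z w} hz hw := by
    simpa only [one_smul] using smul_add_smul_mem_SIter_zeroOutput A B C D 1 1 hz hw
  zero_mem' := mem_SIter_self (zero_mem_Fmap A B C D (Set.mem_singleton 0)) ℓ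
  smul_mem' c z hz := by
    simpa only [zero_smul, add_zero] using smul_add_smul_mem_SIter_zeroOutput A B C D c 0 hz hz

theorem exists_Tstar_eq_zeroOutputReach :
    ∃ N, Tstar A B C D = zeroOutputReach A B C D N := by
  have h0 := zero_mem_Fmap A B C D (Set.mem_singleton (0 : Fin s → ℝ))
  obtain ⟨N, hN⟩ := monotone_stabilizes_iff_noetherian.mpr inferInstance
    ⟨zeroOutputReach A B C D, SIter_monotone h0⟩
  refine ⟨N, Set.Subset.antisymm (fun τ hτ => ?_) (SIter_subset_RSet h0 N)⟩
  rw [Tstar, RSet_eq_iUnion, Set.mem_iUnion] at hτ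
  obtain ⟨ℓ, hτ⟩ := hτ
  have hstab : zeroOutputReach A B C D N = zeroOutputReach A B C D (max (ℓ + 1) N) :=
    hN _ (le_max_right _ _)
  rw [SetLike.mem_coe, hstab]
  exact SIter_monotone h0 (le_max_left _ _) hτ

theorem exists_delayed_zeroOutput_path {N : ℕ} {τ : Fin n → ℝ}
    (hτ : τ ∈ SIter (Fmap A B C D {0}) N 0) (i : ℕ) :
    ∃ η : ℕ → Fin n → ℝ, η 0 ∈ Tstar A B C D ∧
      (∀ k < i, η (k + 1) ∈ Fmap A B C D {0} (η k)) ∧ η i = τ ∧ ∀ k, k + N ≤ i → η k = 0 := by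
  have h0 := zero_mem_Fmap A B C D (Set.mem_singleton (0 : Fin s → ℝ))
  obtain ⟨g, hg0, hg, rfl⟩ := mem_SIter_iff.1 hτ
  -- run the `N`-step path `g` so that it arrives at time `i`, idling at `0` before it starts
  refine ⟨fun k => g (k + N - i), ?_, fun k hk => ?_, by simp, fun k hk => ?_⟩
  · show g (0 + N - i) ∈ _
    rw [zero_add]
    exact SIter_subset_RSet h0 (N - i)
      (mem_SIter_iff.2 ⟨g, hg0, fun k hk => hg k (by omega), rfl⟩)
  · by_cases hik : i ≤ k + N
    · simpa only [show k + 1 + N - i = k + N - i + 1 by omega] using hg _ (by omega)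
    · simpa only [show k + 1 + N - i = 0 by omega, show k + N - i = 0 by omega, hg0] using h0
  · simp only [Nat.sub_eq_zero_of_le hk, hg0]

theorem exists_mem_Tstar_Fmap_nonempty {N : ℕ} (hN : Tstar A B C D = zeroOutputReach A B C D N)
    {Y : Set (Fin s → ℝ)} (hK : Kset A B C D + Y = Set.univ) (x : Fin n → ℝ) :
    ∃ τ ∈ Tstar A B C D, (Fmap A B C D Y (x + τ)).Nonempty := by
  obtain ⟨_, ⟨u, t, ht, rfl⟩, y, hy, hsum⟩ := Set.mem_add.1 (hK ▸ Set.mem_univ (C.mulVec x))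
  rw [hN] at ht ⊢
  refine ⟨-t, neg_mem ht, _, -u, ?_, rfl⟩
  convert hy using 1
  rw [← sub_eq_zero, Matrix.mulVec_add, Matrix.mulVec_neg, Matrix.mulVec_neg, ← hsum]
  abel

theorem exists_Fmap_path_correction {N : ℕ} (hN : Tstar A B C D = zeroOutputReach A B C D N)
    {Y : Set (Fin s → ℝ)} (hK : Kset A B C D + Y = Set.univ) (i : ℕ) (f : ℕ → Fin n → ℝ)
    (hf : ∀ k < i, f (k + 1) ∈ Fmap A B C D Y (f k)) :
    ∃ f' : ℕ → Fin n → ℝ, (∀ k < i + 1, f' (k + 1) ∈ Fmap A B C D Y (f' k)) ∧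
      f' 0 - f 0 ∈ zeroOutputReach A B C D N ∧ ∀ k, k + N ≤ i → f' k = f k := by
  obtain ⟨τ, hτ, z, hz⟩ := exists_mem_Tstar_Fmap_nonempty A B C D hN hK (f i)
  obtain ⟨η, hη0, hη, hηi, hηquiet⟩ :=
    exists_delayed_zeroOutput_path A B C D (by rwa [hN] at hτ) i
  refine ⟨Function.update (f + η) (i + 1) z, fun k hk => ?_, ?_, fun k hk => ?_⟩
  · rcases Nat.lt_succ_iff_lt_or_eq.1 hk with hk | rfl
    · rw [Function.update_of_ne (by omega), Function.update_of_ne (by omega)]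
      simpa only [Pi.add_apply, one_smul] using smul_add_smul_mem_Fmap A B C D (a := 1) (b := 1)
        (fun y hy y' hy' => by simpa [Set.mem_singleton_iff.1 hy'] using hy) (hf k hk) (hη k hk)
    · rw [Function.update_self, Function.update_of_ne (by omega), Pi.add_apply, hηi]
      exact hz
  · rw [Function.update_of_ne (by omega), Pi.add_apply, add_sub_cancel_left, ← SetLike.mem_coe,
      ← hN]
    exact hη0
  · rw [Function.update_of_ne (by omega), Pi.add_apply, hηquiet k hk, add_zero]

theorem exists_add_mem_XSet_Fmap {Y : Set (Fin s → ℝ)} (hK : Kset A B C D + Y = Set.univ)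
    (x : Fin n → ℝ) :
    ∃ t ∈ Tstar A B C D, x + t ∈ XSet (Fmap A B C D Y) := by
  obtain ⟨N, hN⟩ := exists_Tstar_eq_zeroOutputReach A B C D
  rw [hN]
  exact exists_add_mem_XSet_of_correction (zeroOutputReach A B C D N).toAddSubgroup N
    (exists_Fmap_path_correction A B C D hN hK) x

end ConstrainedSystem

theorem stmt14_general {n m s : ℕ} (A : Matrix (Fin n) (Fin n) ℝ) (B : Matrix (Fin n) (Fin m) ℝ)
    (C : Matrix (Fin s) (Fin n) ℝ) (D : Matrix (Fin s) (Fin m) ℝ)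
    (Y : Set (Fin s → ℝ)) (hY : Convex ℝ Y) (h0Y : (0 : Fin s → ℝ) ∈ Y)
    (hK : Kset A B C D + Y = Set.univ) :
    XSet (Fmap A B C D Y) ⊆ RSet (Fmap A B C D Y) ↔
      RSet (Fmap A B C D Y) = Set.univ := by
  refine ⟨fun hXR => Set.eq_univ_of_forall fun x => ?_, fun h => h ▸ Set.subset_univ _⟩
  obtain ⟨N, hN⟩ := exists_Tstar_eq_zeroOutputReach A B C D
  obtain ⟨t, ht, hxt⟩ := exists_add_mem_XSet_Fmap A B C D hK ((2 : ℝ) • x)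
  have hTR : Tstar A B C D ⊆ RSet (Fmap A B C D Y) :=
    RSet_subset_RSet fun _ _ ⟨u, hu, hz⟩ => ⟨u, Set.mem_singleton_iff.1 hu ▸ h0Y, hz⟩
  have hneg : -t ∈ Tstar A B C D := by
    rw [hN] at ht ⊢
    exact neg_mem ht
  -- `x` is the midpoint of `2x + t ∈ X(F) ⊆ R(F)` and `-t ∈ 𝒯* ⊆ R(F)`
  convert convex_RSet_Fmap A B C D hY h0Y (hXR hxt) (hTR hneg) (a := 1 / 2) (b := 1 / 2)
    (by norm_num) (by norm_num) (by norm_num) using 1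
  module

/-- If `𝒦(Σ) + 𝒴 = ℝ^s`, then `(Σ,𝒴)` is reachable iff `R(F) = ℝ^n`. -/
theorem stmt14 {n m s : ℕ} (A : Matrix (Fin n) (Fin n) ℝ) (B : Matrix (Fin n) (Fin m) ℝ)
    (C : Matrix (Fin s) (Fin n) ℝ) (D : Matrix (Fin s) (Fin m) ℝ)
    (Y : Set (Fin s → ℝ)) (hY : Convex ℝ Y) (h0Y : (0 : Fin s → ℝ) ∈ Y)
    (hsolid : (interior (Y ∩ CDrange C D)).Nonempty)
    (hK : Kset A B C D + Y = Set.univ) :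
    XSet (Fmap A B C D Y) ⊆ RSet (Fmap A B C D Y) ↔
      RSet (Fmap A B C D Y) = Set.univ :=
  stmt14_general A B C D Y hY h0Y hK
end
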